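/- Let K be a field, α, λ ∈ K∖{0} and μ ∈ K, and let G_α = λ²·z·(αz−x)³ + α²·x·y²·(μ·(αz−x) − α·λ·y) ∈ K[x,y,z]. Then G_α is homogeneous of degree 4 and satisfies: (i) G_α(x+α, y, 1), as a polynomial in K[x,y], lies in the cube of the ideal (x,y) (so the curve G_α = 0 has multiplicity at least 3 at the point (α:0:1)); (ii) G_α(1,0,0) = 0 and the homogeneous degree-1 part of G_α(1,y,z) ∈ K[y,z] equals −λ²·z (so the curve passes through (1:0:0) with tangent line z = 0); (iii) G_α(0,y,z) = λ²·α³·z⁴ (so the curve meets the line x = 0 only at (0:1:0)); (iv) y⁴ divides G_α(x·y⁴, 1, y) in K[x,y], and the quotient h(x,y) = G_α(x·y⁴, 1, y)/y⁴ satisfies h(λ, 0) = 0; (v) y divides h(x·y+λ, y) in K[x,y], and the quotient h(x·y+λ, y)/y vanishes at (x,y) = (μ, 0). -/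
import Mathlib


/-!  Formalization of a statement from "Two kinds of examples of curves with
isomorphic complements" (J. Blanc).  `Gq K θ l m` is the homogeneous quartic
`G_θ = λ²·z·(θz−x)³ + θ²·x·y²·(μ·(θz−x) − θ·λ·y)` in `K[x,y,z]`, where the
variables `x, y, z` are `X 0, X 1, X 2` and `l = λ`, `m = μ`. -/

open MvPolynomial

noncomputable section

/-- The quartic `G_θ = λ²·z·(θz−x)³ + θ²·x·y²·(μ·(θz−x) − θ·λ·y)`. -/
def Gq (K : Type) [Field K] (t l m : K) : MvPolynomial (Fin 3) K :=
  C (l ^ 2) * X 2 * (C t * X 2 - X 0) ^ 3 +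
    C (t ^ 2) * X 0 * (X 1) ^ 2 * (C m * (C t * X 2 - X 0) - C (t * l) * X 1)


private lemma mem3_aux (K : Type) [Field K] (i j : ℕ) (hij : 3 ≤ i + j) :
    (X 0 : MvPolynomial (Fin 2) K) ^ i * X 1 ^ j
      ∈ (Ideal.span {(X 0 : MvPolynomial (Fin 2) K), X 1}) ^ 3 := by
  have hX0 : (X 0 : MvPolynomial (Fin 2) K) ∈ Ideal.span {(X 0 : MvPolynomial (Fin 2) K), X 1} :=
    Ideal.subset_span (by simp)
  have hX1 : (X 1 : MvPolynomial (Fin 2) K) ∈ Ideal.span {(X 0 : MvPolynomial (Fin 2) K), X 1} :=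
    Ideal.subset_span (by simp)
  have h := Ideal.mul_mem_mul (Ideal.pow_mem_pow hX0 i) (Ideal.pow_mem_pow hX1 j)
  rw [← pow_add] at h
  exact Ideal.pow_le_pow_right hij h

private lemma hcomp_aux (K : Type) [Field K] (n : ℕ) (c : K) (p q : ℕ) :
    homogeneousComponent n (C c * (X 0 ^ p * X 1 ^ q) : MvPolynomial (Fin 2) K)
      = if n = p + q then C c * (X 0 ^ p * X 1 ^ q) else 0 := by
  apply homogeneousComponent_of_mem
  rw [mem_homogeneousSubmodule]
  simpa using (isHomogeneous_C _ c).mul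
    (((isHomogeneous_X K 0).pow p).mul ((isHomogeneous_X K 1).pow q))

private lemma part45_aux (K : Type) [Field K] (a l m : K) :
    (∃ h : MvPolynomial (Fin 2) K,
      aeval ![(X 0 : MvPolynomial (Fin 2) K) * (X 1) ^ 4, 1, X 1] (Gq K a l m)
          = (X 1) ^ 4 * h ∧
      eval ![l, 0] h = 0 ∧
      ∃ h₂ : MvPolynomial (Fin 2) K,
        aeval ![(X 0 : MvPolynomial (Fin 2) K) * X 1 + C l, X 1] h = X 1 * h₂ ∧
        eval ![m, 0] h₂ = 0) := by
  refine ⟨C (l^2) * (C a - X 0 * X 1 ^ 3) ^ 3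
      + C (a^2) * X 0 * (C (m*a) * X 1 - C m * X 0 * X 1 ^ 4 - C (a*l)), ?_, ?_, ?_⟩
  · simp [Gq, map_mul, map_pow, map_sub]
    ring
  · simp
    ring
  · refine ⟨C (a^3*m) * (X 0 * X 1 + C l) - C (a^2*m) * (X 0 * X 1 + C l)^2 * X 1^3
      - C (a^3*l) * X 0 - C (3*l^2*a^2) * (X 0 * X 1 + C l) * X 1^2
      + C (3*l^2*a) * (X 0 * X 1 + C l)^2 * X 1^5
      - C (l^2) * (X 0 * X 1 + C l)^3 * X 1^8, ?_, ?_⟩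
    · simp [map_mul, map_pow, map_sub, map_add, map_ofNat]
      ring
    · simp
      ring

/-- the quartic `G_α` is homogeneous of degree 4, has multiplicity ≥ 3 at
`(α:0:1)`, passes through `(1:0:0)` with tangent line `z = 0`, meets the line `x = 0`
only at `(0:1:0)` (with `G_α(0,y,z) = λ²α³z⁴`), and its strict transform passes through
the infinitely near points `q(λ)` and `r(λ,μ)`.  In conditions (i)–(iii) the two
variables of `MvPolynomial (Fin 2) K` are the two remaining affine coordinates, and in
(iv)–(v) they are the local coordinates `(x, y)` of the blow-up `(x,y) ↦ (xy⁴:1:y)`. -/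
theorem statement7 (K : Type) [Field K] (a l : K) (ha : a ≠ 0) (hl : l ≠ 0) (m : K) :
    (Gq K a l m).IsHomogeneous 4 ∧
    -- (i) multiplicity ≥ 3 at (α:0:1)
    (aeval ![(X 0 : MvPolynomial (Fin 2) K) + C a, X 1, 1] (Gq K a l m)
        ∈ (Ideal.span {(X 0 : MvPolynomial (Fin 2) K), X 1}) ^ 3) ∧
    -- (ii) passes through (1:0:0), tangent to z = 0
    (eval ![1, 0, 0] (Gq K a l m) = 0 ∧
      homogeneousComponent 1 (aeval ![(1 : MvPolynomial (Fin 2) K), X 0, X 1] (Gq K a l m))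
        = -(C (l ^ 2) * X 1)) ∧
    -- (iii) meets x = 0 only at (0:1:0)
    (aeval ![(0 : MvPolynomial (Fin 2) K), X 0, X 1] (Gq K a l m)
        = C (l ^ 2 * a ^ 3) * (X 1) ^ 4) ∧
    -- (iv) and (v): passage through q(λ) and r(λ,μ)
    (∃ h : MvPolynomial (Fin 2) K,
      aeval ![(X 0 : MvPolynomial (Fin 2) K) * (X 1) ^ 4, 1, X 1] (Gq K a l m)
          = (X 1) ^ 4 * h ∧
      eval ![l, 0] h = 0 ∧
      ∃ h₂ : MvPolynomial (Fin 2) K,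
        aeval ![(X 0 : MvPolynomial (Fin 2) K) * X 1 + C l, X 1] h = X 1 * h₂ ∧
        eval ![m, 0] h₂ = 0) := by
  refine ⟨?_, ?_, ⟨?_, ?_⟩, ?_, ?_⟩
  · -- homogeneity
    have h1 : ((C a : MvPolynomial (Fin 3) K) * X 2 - X 0).IsHomogeneous 1 :=
      ((isHomogeneous_C _ _).mul (isHomogeneous_X _ _)).sub (isHomogeneous_X _ _)
    have h2 : ((C m : MvPolynomial (Fin 3) K) * (C a * X 2 - X 0)
        - C (a * l) * X 1).IsHomogeneous 1 :=
      ((isHomogeneous_C _ _).mul h1).sub ((isHomogeneous_C _ _).mul (isHomogeneous_X _ _))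
    exact (((isHomogeneous_C _ _).mul (isHomogeneous_X _ _)).mul (h1.pow 3)).add
      (((((isHomogeneous_C _ _).mul (isHomogeneous_X _ _)).mul
        ((isHomogeneous_X _ _).pow 2))).mul h2)
  · -- (i)
    have h : aeval ![(X 0 : MvPolynomial (Fin 2) K) + C a, X 1, 1] (Gq K a l m)
        = C (-l^2) * (X 0 ^ 3 * X 1 ^ 0) + C (-(a^2*m)) * (X 0 ^ 2 * X 1 ^ 2)
          + C (-(a^3*l)) * (X 0 ^ 1 * X 1 ^ 3) + C (-(a^3*m)) * (X 0 ^ 1 * X 1 ^ 2)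
          + C (-(a^4*l)) * (X 0 ^ 0 * X 1 ^ 3) := by
      simp [Gq, map_mul, map_pow, map_neg]
      ring
    rw [h]
    refine Ideal.add_mem _ (Ideal.add_mem _ (Ideal.add_mem _ (Ideal.add_mem _ ?_ ?_) ?_) ?_) ?_ <;>
      exact Ideal.mul_mem_left _ _ (mem3_aux K _ _ (by norm_num))
  · -- (ii) first part
    simp [Gq]
  · -- (ii) second part
    have h : aeval ![(1 : MvPolynomial (Fin 2) K), X 0, X 1] (Gq K a l m)
        = C (l^2*a^3) * (X 0 ^ 0 * X 1 ^ 4) + C (-(3*l^2*a^2)) * (X 0 ^ 0 * X 1 ^ 3)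
          + C (3*l^2*a) * (X 0 ^ 0 * X 1 ^ 2) + C (-(l^2)) * (X 0 ^ 0 * X 1 ^ 1)
          + C (a^3*m) * (X 0 ^ 2 * X 1 ^ 1) + C (-(a^2*m)) * (X 0 ^ 2 * X 1 ^ 0)
          + C (-(a^3*l)) * (X 0 ^ 3 * X 1 ^ 0) := by
      simp [Gq, map_mul, map_pow, map_neg, map_ofNat]
      ring
    rw [h]
    simp only [map_add, hcomp_aux]
    norm_num
  · -- (iii)
    simp [Gq, map_mul, map_pow]
    ring
  · exact part45_aux K a l m

end
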